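/- arXiv:cs/0207094 — 4 statements merged into one kernel-verified Lean document; each statement's English description precedes it below -/
import Mathlib

section
/- Let r be a database instance over a finite domain D and IC a set of binary integrity constraints. If S is a model of the change program Π_Δ(r), then the database instance I(S) satisfies IC. -/
namespace CQA

/-! ## Ground disjunctive extended logic programs and answer sets -/

/-- Ground literals over atoms of type `α`: atoms and classically negated atoms. -/
inductive Lit (α : Type) : Type
  | pos : α → Lit α
  | neg : α → Lit α

/-- Complement of a ground literal. -/
def Lit.compl {α : Type} : Lit α → Lit α
  | .pos a => .neg a
  | .neg a => .pos a

/-- A ground disjunctive rule `⋁ head ← body, not nbody`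
(`nbody` collects the literals occurring under weak negation `not`). -/
structure Rule (α : Type) where
  head : Set (Lit α)
  body : Set (Lit α)
  nbody : Set (Lit α)

/-- A ground disjunctive extended logic program: a set of ground rules. -/
abbrev Program (α : Type) := Set (Rule α)

/-- A fact. -/
def fact {α : Type} (L : Lit α) : Rule α := ⟨{L}, ∅, ∅⟩

/-- `S` contains no complementary pair of literals. -/
def Coherent {α : Type} (S : Set (Lit α)) : Prop :=
  ∀ a : α, ¬ (Lit.pos a ∈ S ∧ Lit.neg a ∈ S)

/-- `S` satisfies every rule of `P`, reading `not L` as `L ∉ S`: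
whenever all body literals are in `S` and no weakly negated literal is in `S`,
some head disjunct is in `S`. -/
def SatProg {α : Type} (S : Set (Lit α)) (P : Program α) : Prop :=
  ∀ R ∈ P, R.body ⊆ S → (∀ L ∈ R.nbody, L ∉ S) → ∃ L ∈ R.head, L ∈ S

/-- A model of a ground program: a set of ground literals without complementary
pairs satisfying every rule, with `not L` read as `L ∉ S`. -/
def IsModel {α : Type} (S : Set (Lit α)) (P : Program α) : Prop :=
  Coherent S ∧ SatProg S P

/-- The Gelfond–Lifschitz reduct of `P` with respect to `S`: delete every rule
whose body contains `not L` with `L ∈ S`, then delete all remaining `not L`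
conditions. -/
def reduct {α : Type} (P : Program α) (S : Set (Lit α)) : Program α :=
  {R' | ∃ R ∈ P, (∀ L ∈ R.nbody, L ∉ S) ∧ R' = Rule.mk R.head R.body ∅}

/-- `S` is an answer set of `P`: `S` has no complementary pair and is a minimal
model of the reduct `^S P`. -/
def AnswerSet {α : Type} (S : Set (Lit α)) (P : Program α) : Prop :=
  Coherent S ∧ SatProg S (reduct P S) ∧
    ∀ S' : Set (Lit α), S' ⊆ S → SatProg S' (reduct P S) → S' = S

/-- The intersection of all answer sets of `P`. -/
def Core {α : Type} (P : Program α) : Set (Lit α) :=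
  {L | ∀ S : Set (Lit α), AnswerSet S P → L ∈ S}

/-! ## Well-founded semantics for ground extended disjunctive programs -/

/-- The body of rule `R` is true in the partial interpretation `I`:
the body literals belong to `I` and every weakly negated literal is false
(its complement belongs to `I`). -/
def bodyTrue {α : Type} (I : Set (Lit α)) (R : Rule α) : Prop :=
  R.body ⊆ I ∧ ∀ L ∈ R.nbody, L.compl ∈ I

/-- Immediate-consequence operator `T_Π(I)`: all literals occurring in the head
of a rule whose body is true in `I` and whose remaining head disjuncts are
false in `I`. -/
def Timm {α : Type} (P : Program α) (I : Set (Lit α)) : Set (Lit α) :=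
  {L | ∃ R ∈ P, L ∈ R.head ∧ bodyTrue I R ∧ ∀ L' ∈ R.head, L' ≠ L → L'.compl ∈ I}

/-- `X` is an unfounded set of literals with respect to `I`: for every `L ∈ X`
and every rule with `L` in its head, either the body is false or defeated
(some body literal has its complement in `I` or lies in `X`, or some weakly
negated literal is in `I`), or the head is already satisfied by `I`
independently of `X`. -/
def UnfoundedSet {α : Type} (P : Program α) (I X : Set (Lit α)) : Prop :=
  ∀ L ∈ X, ∀ R ∈ P, L ∈ R.head →
    (∃ B ∈ R.body, B.compl ∈ I ∨ B ∈ X) ∨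
    (∃ B ∈ R.nbody, B ∈ I) ∨
    (∃ L' ∈ R.head, L' ≠ L ∧ L' ∈ I ∧ L' ∉ X)

/-- The greatest unfounded set of `P` with respect to `I`. -/
def GUS {α : Type} (P : Program α) (I : Set (Lit α)) : Set (Lit α) :=
  ⋃₀ {X | UnfoundedSet P I X}

/-- The well-founded operator `𝒲_Π(I) := T_Π(I) ∪ ¬.GUS_Π(I)`. -/
def WOp {α : Type} (P : Program α) (I : Set (Lit α)) : Set (Lit α) :=
  Timm P I ∪ Lit.compl '' GUS P I

/-- The well-founded interpretation `W_Π`, the least fixpoint `𝒲_Π^ω(∅)`. -/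
def WFInterp {α : Type} (P : Program α) : Set (Lit α) :=
  ⋃ n : ℕ, (WOp P)^[n] ∅

/-! ## Relational databases and binary integrity constraints -/

/-- A ground database atom `p(ā)` over predicates `Pred` and domain `D`. -/
abbrev DBAtom (Pred D : Type) := Pred × List D

/-- A database instance over the schema `(Pred, ar)` and domain `D`:
a finite set of ground atoms respecting the arities. -/
structure Instance (Pred D : Type) (ar : Pred → ℕ) where
  atoms : Set (DBAtom Pred D)
  finite : atoms.Finite
  wf : ∀ a ∈ atoms, a.2.length = ar a.1

/-- A binary integrity constraint in standard format
`∀ (⋁_i p_i(x̄_i) ∨ ⋁_i ¬q_i(ȳ_i) ∨ φ)` with `1 ≤ n + m ≤ 2`,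
where `φ` is a formula of built-in predicates with fixed extensions
(represented semantically as a predicate on variable assignments). -/
structure BIC (Pred D : Type) (ar : Pred → ℕ) where
  nvars : ℕ
  pos : List (Pred × List (Fin nvars))
  neg : List (Pred × List (Fin nvars))
  builtin : (Fin nvars → D) → Prop
  wfpos : ∀ a ∈ pos, a.2.length = ar a.1
  wfneg : ∀ a ∈ neg, a.2.length = ar a.1
  lb : 1 ≤ pos.length + neg.length
  ub : pos.length + neg.length ≤ 2

variable {Pred D : Type} {ar : Pred → ℕ}

/-- The ground clause of constraint `c` under the assignment `ν` holds in the
set of atoms `A`. -/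
def BIC.holdsAt (c : BIC Pred D ar) (A : Set (DBAtom Pred D)) (ν : Fin c.nvars → D) : Prop :=
  (∃ a ∈ c.pos, (a.1, a.2.map ν) ∈ A) ∨ (∃ a ∈ c.neg, (a.1, a.2.map ν) ∉ A) ∨ c.builtin ν

/-- The set of atoms `A` (as a Herbrand structure over `D`) satisfies all
constraints in `IC`. -/
def SatSet (A : Set (DBAtom Pred D)) (IC : Set (BIC Pred D ar)) : Prop :=
  ∀ c ∈ IC, ∀ ν : Fin c.nvars → D, c.holdsAt A ν

/-- The instance `r` satisfies the set of integrity constraints `IC`. -/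
def SatIC (r : Instance Pred D ar) (IC : Set (BIC Pred D ar)) : Prop :=
  SatSet r.atoms IC

/-- `r'` is a repair of `r` w.r.t. `IC`: `r' ⊨ IC` and the symmetric difference
`Δ(r,r')` is minimal under set inclusion in `{Δ(r,r*) | r* ⊨ IC}`. -/
def IsRepair (r r' : Instance Pred D ar) (IC : Set (BIC Pred D ar)) : Prop :=
  SatIC r' IC ∧
    ∀ r'' : Instance Pred D ar, SatIC r'' IC →
      symmDiff r.atoms r''.atoms ⊆ symmDiff r.atoms r'.atoms →
      symmDiff r.atoms r''.atoms = symmDiff r.atoms r'.atoms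

/-- `r'` is a Dalal repair of `r` w.r.t. `IC`: `r' ⊨ IC` and the cardinality
`|Δ(r,r')|` is minimal in `{|Δ(r,r*)| : r* ⊨ IC}`. -/
def IsDalalRepair (r r' : Instance Pred D ar) (IC : Set (BIC Pred D ar)) : Prop :=
  SatIC r' IC ∧
    ∀ r'' : Instance Pred D ar, SatIC r'' IC →
      (symmDiff r.atoms r'.atoms).ncard ≤ (symmDiff r.atoms r''.atoms).ncard

/-! ## The change program and the repair program -/

/-- Atoms of the repair programs: database atoms `p(ā)`, primed atoms `p′(ā)`,
and domain atoms `dom(a)` (playing the role of `act_r(a)` when grounding over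
the active domain). -/
inductive GAtom (Pred D : Type) : Type
  | base : Pred → List D → GAtom Pred D
  | primed : Pred → List D → GAtom Pred D
  | dom : D → GAtom Pred D

/-- Variables occurring in a list of atoms with variable tuples. -/
def varsIn {n : ℕ} (l : List (Pred × List (Fin n))) : Set (Fin n) :=
  {v | ∃ a ∈ l, v ∈ a.2}

/-- The domain atoms `dom(ν v)` for the variables `v ∈ V`. -/
def domBody {n : ℕ} (ν : Fin n → D) (V : Set (Fin n)) : Set (Lit (GAtom Pred D)) :=
  {L | ∃ v ∈ V, L = Lit.pos (GAtom.dom (ν v))}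

/-- The positive primed head disjuncts `p′_i(ν x̄_i)` of constraint `c`. -/
def posHead (c : BIC Pred D ar) (ν : Fin c.nvars → D) : Set (Lit (GAtom Pred D)) :=
  {L | ∃ a ∈ c.pos, L = Lit.pos (GAtom.primed a.1 (a.2.map ν))}

/-- The negative primed head disjuncts `¬q′_i(ν ȳ_i)` of constraint `c`. -/
def negHead (c : BIC Pred D ar) (ν : Fin c.nvars → D) : Set (Lit (GAtom Pred D)) :=
  {L | ∃ a ∈ c.neg, L = Lit.neg (GAtom.primed a.1 (a.2.map ν))}

/-- The triggering rule of constraint `c` at assignment `ν`: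
`⋁ p′_i ∨ ⋁ ¬q′_i ← dom(x̄_1,…,x̄_n), not p_1,…,not p_n, q_1,…,q_m, not φ`
(the condition `not φ` on the built-in formula, which has a fixed extension,
is accounted for by including the ground rule only when `φ(ν)` is false). -/
def trigRule (c : BIC Pred D ar) (ν : Fin c.nvars → D) : Rule (GAtom Pred D) where
  head := posHead c ν ∪ negHead c ν
  body := domBody ν (varsIn c.pos) ∪
    {L | ∃ a ∈ c.neg, L = Lit.pos (GAtom.base a.1 (a.2.map ν))}
  nbody := {L | ∃ a ∈ c.pos, L = Lit.pos (GAtom.base a.1 (a.2.map ν))}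

/-- The stabilizing rule of `c` at `ν` for the `j`-th positive database literal:
remove `p′_j` from the disjunctive head and add its complement `¬p′_j` to the
body, together with the `dom` atoms and `not φ`. -/
def stabPosRule (c : BIC Pred D ar) (ν : Fin c.nvars → D) (j : Fin c.pos.length) :
    Rule (GAtom Pred D) where
  head := {L | ∃ i : Fin c.pos.length, i ≠ j ∧
      L = Lit.pos (GAtom.primed (c.pos.get i).1 ((c.pos.get i).2.map ν))} ∪ negHead c ν
  body := domBody ν (varsIn c.pos ∪ varsIn c.neg) ∪
    {Lit.neg (GAtom.primed (c.pos.get j).1 ((c.pos.get j).2.map ν))}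
  nbody := ∅

/-- The stabilizing rule of `c` at `ν` for the `j`-th negative database literal:
remove `¬q′_j` from the disjunctive head and add its complement `q′_j` to the
body, together with the `dom` atoms and `not φ`. -/
def stabNegRule (c : BIC Pred D ar) (ν : Fin c.nvars → D) (j : Fin c.neg.length) :
    Rule (GAtom Pred D) where
  head := posHead c ν ∪ {L | ∃ i : Fin c.neg.length, i ≠ j ∧
      L = Lit.neg (GAtom.primed (c.neg.get i).1 ((c.neg.get i).2.map ν))}
  body := domBody ν (varsIn c.pos ∪ varsIn c.neg) ∪
    {Lit.pos (GAtom.primed (c.neg.get j).1 ((c.neg.get j).2.map ν))}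
  nbody := ∅

/-- The change program `Π_Δ(r)` grounded over the subdomain `A ⊆ D`:
facts for `r` and for the (active) domain, triggering rules and stabilizing
rules for all constraints in `IC`. -/
def changeProgOn (r : Instance Pred D ar) (IC : Set (BIC Pred D ar)) (A : Set D) :
    Program (GAtom Pred D) :=
  {R | ∃ a ∈ r.atoms, R = fact (Lit.pos (GAtom.base a.1 a.2))} ∪
  {R | ∃ d ∈ A, R = fact (Lit.pos (GAtom.dom d))} ∪
  {R | ∃ c ∈ IC, ∃ ν : Fin c.nvars → D, (∀ i, ν i ∈ A) ∧ ¬ c.builtin ν ∧ R = trigRule c ν} ∪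
  {R | ∃ c ∈ IC, ∃ ν : Fin c.nvars → D, (∀ i, ν i ∈ A) ∧ ¬ c.builtin ν ∧
        ∃ j : Fin c.pos.length, R = stabPosRule c ν j} ∪
  {R | ∃ c ∈ IC, ∃ ν : Fin c.nvars → D, (∀ i, ν i ∈ A) ∧ ¬ c.builtin ν ∧
        ∃ j : Fin c.neg.length, R = stabNegRule c ν j}

/-- The change program `Π_Δ(r)` grounded over the full domain `D`. -/
def changeProg (r : Instance Pred D ar) (IC : Set (BIC Pred D ar)) :
    Program (GAtom Pred D) :=
  changeProgOn r IC Set.univ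

/-- The persistence rules `p′(x̄) ← p(x̄), not ¬p′(x̄)` and
`¬p′(x̄) ← dom(x̄), not p(x̄), not p′(x̄)`, grounded over `A ⊆ D`. -/
def persistProgOn (ar : Pred → ℕ) (A : Set D) : Program (GAtom Pred D) :=
  {R | ∃ (p : Pred) (t : List D), t.length = ar p ∧ (∀ d ∈ t, d ∈ A) ∧
    (R = Rule.mk {Lit.pos (GAtom.primed p t)} {Lit.pos (GAtom.base p t)}
          {Lit.neg (GAtom.primed p t)} ∨
     R = Rule.mk {Lit.neg (GAtom.primed p t)} {L | ∃ d ∈ t, L = Lit.pos (GAtom.dom d)}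
          {Lit.pos (GAtom.base p t), Lit.pos (GAtom.primed p t)})}

/-- The repair program `Π(r)` grounded over `A ⊆ D`: the change program plus
the persistence rules. -/
def repairProgOn (r : Instance Pred D ar) (IC : Set (BIC Pred D ar)) (A : Set D) :
    Program (GAtom Pred D) :=
  changeProgOn r IC A ∪ persistProgOn ar A

/-- The repair program `Π(r)` grounded over the full domain `D`. -/
def repairProg (r : Instance Pred D ar) (IC : Set (BIC Pred D ar)) :
    Program (GAtom Pred D) :=
  repairProgOn r IC Set.univ

/-- The database instance corresponding to a set of ground literals:
`I(S) = {p(ā) | p′(ā) ∈ S} ∪ {p(ā) | p(ā) ∈ S and ¬p′(ā) ∉ S}`. -/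
def IofS (S : Set (Lit (GAtom Pred D))) : Set (DBAtom Pred D) :=
  {a | Lit.pos (GAtom.primed a.1 a.2) ∈ S} ∪
  {a | Lit.pos (GAtom.base a.1 a.2) ∈ S ∧ Lit.neg (GAtom.primed a.1 a.2) ∉ S}

/-- The database instance `{p(ā) | p′(ā) ∈ S}` extracted from the primed
atoms of `S`. -/
def primedAtoms (S : Set (Lit (GAtom Pred D))) : Set (DBAtom Pred D) :=
  {a | Lit.pos (GAtom.primed a.1 a.2) ∈ S}

/-- `S(r,r′) = {p(ā) | p(ā) ∈ r} ∪ {p′(ā) | p(ā) ∈ r′} ∪ {¬p′(ā) | p(ā) ∉ r′}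
∪ {dom(a) | a ∈ D}`. -/
def SofRR (r r' : Instance Pred D ar) : Set (Lit (GAtom Pred D)) :=
  {L | ∃ a ∈ r.atoms, L = Lit.pos (GAtom.base a.1 a.2)} ∪
  {L | ∃ a ∈ r'.atoms, L = Lit.pos (GAtom.primed a.1 a.2)} ∪
  {L | ∃ a : DBAtom Pred D, a.2.length = ar a.1 ∧ a ∉ r'.atoms ∧
        L = Lit.neg (GAtom.primed a.1 a.2)} ∪
  {L | ∃ d : D, L = Lit.pos (GAtom.dom d)}

/-! ## Active domain and domain independence -/

/-- The active domain of `r`: the constants occurring in `r`. -/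
def ActDom (r : Instance Pred D ar) : Set D :=
  {d | ∃ a ∈ r.atoms, d ∈ a.2}

/-- Satisfaction of `IC` in `A` relativized to the subdomain `Dm`. -/
def SatSetOn (A : Set (DBAtom Pred D)) (IC : Set (BIC Pred D ar)) (Dm : Set D) : Prop :=
  ∀ c ∈ IC, ∀ ν : Fin c.nvars → D, (∀ i, ν i ∈ Dm) → c.holdsAt A ν

/-- `IC` is domain independent: for every instance, satisfaction of the
constraints depends only on the active domain. -/
def DomIndep (IC : Set (BIC Pred D ar)) : Prop :=
  ∀ (r : Instance Pred D ar) (A : Set D), ActDom r ⊆ A →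
    (SatSetOn r.atoms IC A ↔ SatSet r.atoms IC)

/-! ## Weak constraints and Dalal answer sets -/

/-- The violated ground instances of the weak constraints
`⇐ p′(x̄), not p(x̄)` and `⇐ ¬p′(x̄), p(x̄)` in `S` (a ground weak constraint
is violated by `S` iff all its body conditions hold in `S`). -/
def weakViol (ar : Pred → ℕ) (S : Set (Lit (GAtom Pred D))) :
    Set (Bool × DBAtom Pred D) :=
  {x | x.2.2.length = ar x.2.1 ∧
    ((x.1 = true ∧ Lit.pos (GAtom.primed x.2.1 x.2.2) ∈ S ∧
        Lit.pos (GAtom.base x.2.1 x.2.2) ∉ S) ∨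
     (x.1 = false ∧ Lit.neg (GAtom.primed x.2.1 x.2.2) ∈ S ∧
        Lit.pos (GAtom.base x.2.1 x.2.2) ∈ S))}

/-- Answer sets of the program `Π^D(r)` (the change program plus the weak
constraints): answer sets of `Π_Δ(r)` minimizing the number of violated
ground weak constraints. -/
def DalalAnswerSet (r : Instance Pred D ar) (IC : Set (BIC Pred D ar))
    (S : Set (Lit (GAtom Pred D))) : Prop :=
  AnswerSet S (changeProg r IC) ∧
    ∀ S' : Set (Lit (GAtom Pred D)), AnswerSet S' (changeProg r IC) →
      (weakViol ar S).ncard ≤ (weakViol ar S').ncard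

/-! ## Functional dependencies and unary constraints -/

/-- A unary integrity constraint: a BIC with at most one database literal. -/
def BIC.IsUnary (c : BIC Pred D ar) : Prop := c.pos.length + c.neg.length ≤ 1

/-- A functional dependency: a BIC of the form
`∀ (¬p(x̄,ȳ) ∨ ¬p(x̄,z̄) ∨ ȳ = z̄)` with pairwise distinct variables. -/
def BIC.IsFD (c : BIC Pred D ar) : Prop :=
  c.pos = [] ∧ ∃ (p : Pred) (xs ys zs : List (Fin c.nvars)),
    ys.length = zs.length ∧ (xs ++ ys ++ zs).Nodup ∧
    c.neg = [(p, xs ++ ys), (p, xs ++ zs)] ∧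
    ∀ ν : Fin c.nvars → D, (c.builtin ν ↔ ys.map ν = zs.map ν)

/-- Proposition `l1`. Let `r` be a database instance over a
finite domain `D` and `IC` a set of binary integrity constraints. If `S` is a
model of the change program `Π_Δ(r)`, then the database instance `I(S)`
satisfies `IC`. -/
theorem statement0 {Pred D : Type} [Finite Pred] [Finite D] {ar : Pred → ℕ}
    (r : Instance Pred D ar) (IC : Set (BIC Pred D ar))
    (S : Set (Lit (GAtom Pred D))) (hS : IsModel S (changeProg r IC)) :
    SatSet (IofS S) IC := by
  obtain ⟨hcoh, hsat⟩ := hS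
  intro c hc ν
  by_contra hcon
  rw [BIC.holdsAt] at hcon
  push_neg at hcon
  obtain ⟨hpos, hneg, hbi⟩ := hcon
  -- domain facts hold in S
  have hdom : ∀ d : D, Lit.pos (GAtom.dom d) ∈ S := by
    intro d
    have hmem : fact (Lit.pos (GAtom.dom d)) ∈ changeProg r IC :=
      Or.inl (Or.inl (Or.inl (Or.inr ⟨d, trivial, rfl⟩)))
    obtain ⟨L, hL, hLS⟩ := hsat _ hmem (by intro x hx; exact absurd hx (Set.notMem_empty x))
      (by intro x hx; exact absurd hx (Set.notMem_empty x))
    rwa [Set.mem_singleton_iff.mp hL] at hLS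
  -- no positive primed head literal can be in S
  have hposP : ∀ a ∈ c.pos, Lit.pos (GAtom.primed a.1 (a.2.map ν)) ∉ S := by
    intro a ha hmem
    exact hpos a ha (Or.inl hmem)
  -- no negative primed head literal can be in S
  have hnegP : ∀ a ∈ c.neg, Lit.neg (GAtom.primed a.1 (a.2.map ν)) ∉ S := by
    intro a ha hmem
    rcases hneg a ha with h | ⟨_, h2⟩
    · exact hcoh _ ⟨h, hmem⟩
    · exact h2 hmem
  -- case split
  by_cases hA : ∃ a ∈ c.pos, Lit.pos (GAtom.base a.1 (a.2.map ν)) ∈ S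
  · -- use a stabilizing positive rule
    obtain ⟨a, ha, hbase⟩ := hA
    have hnegprimed : Lit.neg (GAtom.primed a.1 (a.2.map ν)) ∈ S := by
      by_contra hnp
      exact hpos a ha (Or.inr ⟨hbase, hnp⟩)
    obtain ⟨j, hj⟩ := List.mem_iff_get.mp ha
    have hmem : stabPosRule c ν j ∈ changeProg r IC :=
      Or.inl (Or.inr ⟨c, hc, ν, fun _ => trivial, hbi, j, rfl⟩)
    obtain ⟨L, hL, hLS⟩ := hsat _ hmem
      (by
        rintro L (⟨v, _, rfl⟩ | rfl)
        · exact hdom _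
        · rw [hj]; exact hnegprimed)
      (by intro x hx; exact absurd hx (Set.notMem_empty x))
    rcases hL with ⟨i, _, rfl⟩ | ⟨a', ha', rfl⟩
    · exact hposP _ (List.get_mem _ i) hLS
    · exact hnegP a' ha' hLS
  · push_neg at hA
    by_cases hB : ∃ a ∈ c.neg, Lit.pos (GAtom.base a.1 (a.2.map ν)) ∉ S
    · -- use a stabilizing negative rule
      obtain ⟨a, ha, hbase⟩ := hB
      have hposprimed : Lit.pos (GAtom.primed a.1 (a.2.map ν)) ∈ S := by
        rcases hneg a ha with h | ⟨h1, _⟩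
        · exact h
        · exact absurd h1 hbase
      obtain ⟨j, hj⟩ := List.mem_iff_get.mp ha
      have hmem : stabNegRule c ν j ∈ changeProg r IC :=
        Or.inr ⟨c, hc, ν, fun _ => trivial, hbi, j, rfl⟩
      obtain ⟨L, hL, hLS⟩ := hsat _ hmem
        (by
          rintro L (⟨v, _, rfl⟩ | rfl)
          · exact hdom _
          · rw [hj]; exact hposprimed)
        (by intro x hx; exact absurd hx (Set.notMem_empty x))
      rcases hL with ⟨a', ha', rfl⟩ | ⟨i, _, rfl⟩
      · exact hposP a' ha' hLS
      · exact hnegP _ (List.get_mem _ i) hLS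
    · push_neg at hB
      -- use the triggering rule
      have hmem : trigRule c ν ∈ changeProg r IC :=
        Or.inl (Or.inl (Or.inr ⟨c, hc, ν, fun _ => trivial, hbi, rfl⟩))
      obtain ⟨L, hL, hLS⟩ := hsat _ hmem
        (by
          rintro L (⟨v, _, rfl⟩ | ⟨a, ha, rfl⟩)
          · exact hdom _
          · exact hB a ha)
        (by
          rintro L ⟨a, ha, rfl⟩
          exact hA a ha)
      rcases hL with ⟨a', ha', rfl⟩ | ⟨a', ha', rfl⟩
      · exact hposP a' ha' hLS
      · exact hnegP a' ha' hLS

end CQA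
end

section
/- Let r be a database instance over a finite domain D and IC a set of binary integrity constraints. If r′ is a database instance over the same schema and domain with r′ ⊨ IC, then S(r,r′) is a model of the change program Π_Δ(r). -/
namespace CQA

variable {Pred D : Type} {ar : Pred → ℕ}

section Aux

variable {Pred D : Type} {ar : Pred → ℕ}

lemma pos_base_mem_SofRR (r r' : Instance Pred D ar) (p : Pred) (t : List D) :
    Lit.pos (GAtom.base p t) ∈ SofRR r r' ↔ (p, t) ∈ r.atoms := by
  constructor
  · rintro (((⟨a, ha, hL⟩ | ⟨a, ha, hL⟩) | ⟨a, _, _, hL⟩) | ⟨d, hL⟩) <;>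
      simp_all [Lit.pos.injEq]
  · intro ha
    exact Or.inl (Or.inl (Or.inl ⟨(p, t), ha, rfl⟩))

lemma pos_primed_mem_SofRR (r r' : Instance Pred D ar) (p : Pred) (t : List D) :
    Lit.pos (GAtom.primed p t) ∈ SofRR r r' ↔ (p, t) ∈ r'.atoms := by
  constructor
  · rintro (((⟨a, ha, hL⟩ | ⟨a, ha, hL⟩) | ⟨a, _, _, hL⟩) | ⟨d, hL⟩) <;>
      simp_all [Lit.pos.injEq]
  · intro ha
    exact Or.inl (Or.inl (Or.inr ⟨(p, t), ha, rfl⟩))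

lemma neg_mem_SofRR (r r' : Instance Pred D ar) (g : GAtom Pred D) :
    Lit.neg g ∈ SofRR r r' ↔
      ∃ p t, g = GAtom.primed p t ∧ t.length = ar p ∧ (p, t) ∉ r'.atoms := by
  constructor
  · rintro (((⟨a, ha, hL⟩ | ⟨a, ha, hL⟩) | ⟨a, hl, hn, hL⟩) | ⟨d, hL⟩)
    · exact absurd hL (by simp)
    · exact absurd hL (by simp)
    · cases hL; exact ⟨a.1, a.2, rfl, hl, by simpa using hn⟩
    · exact absurd hL (by simp)
  · rintro ⟨p, t, rfl, hl, hn⟩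
    exact Or.inl (Or.inr ⟨(p, t), hl, hn, rfl⟩)

lemma pos_dom_mem_SofRR (r r' : Instance Pred D ar) (d : D) :
    Lit.pos (GAtom.dom d) ∈ SofRR r r' :=
  Or.inr ⟨d, rfl⟩

end Aux

/-- Proposition `l2`. Let `r` be a database instance over a
finite domain `D` and `IC` a set of binary integrity constraints. If `r'` is a
database instance over the same schema and domain with `r' ⊨ IC`, then
`S(r,r')` is a model of the change program `Π_Δ(r)`. -/
theorem statement1 {Pred D : Type} [Finite Pred] [Finite D] {ar : Pred → ℕ}
    (r r' : Instance Pred D ar) (IC : Set (BIC Pred D ar))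
    (h : SatIC r' IC) :
    IsModel (SofRR r r') (changeProg r IC) := by
  constructor
  · -- Coherent
    intro g ⟨hp, hn⟩
    obtain ⟨p, t, rfl, hl, hnot⟩ := (neg_mem_SofRR r r' g).1 hn
    exact hnot ((pos_primed_mem_SofRR r r' p t).1 hp)
  · -- SatProg
    rintro R ((((⟨a, ha, rfl⟩ | ⟨d, _, rfl⟩) | ⟨c, hc, ν, _, hb, rfl⟩) |
        ⟨c, hc, ν, _, hb, j, rfl⟩) | ⟨c, hc, ν, _, hb, j, rfl⟩) hbody hnbody
    · -- fact for r
      exact ⟨_, rfl, (pos_base_mem_SofRR r r' a.1 a.2).2 (by simpa using ha)⟩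
    · -- dom fact
      exact ⟨_, rfl, pos_dom_mem_SofRR r r' d⟩
    · -- triggering rule
      rcases h c hc ν with (⟨a, ha, hmem⟩ | ⟨a, ha, hmem⟩ | hbi)
      · exact ⟨_, Or.inl ⟨a, ha, rfl⟩, (pos_primed_mem_SofRR r r' _ _).2 hmem⟩
      · refine ⟨_, Or.inr ⟨a, ha, rfl⟩, (neg_mem_SofRR r r' _).2
          ⟨a.1, a.2.map ν, rfl, ?_, hmem⟩⟩
        simpa using c.wfneg a ha
      · exact absurd hbi hb
    · -- stabilizing rule (positive literal j)
      have hjnot : ((c.pos.get j).1, (c.pos.get j).2.map ν) ∉ r'.atoms := by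
        have := hbody (Or.inr rfl)
        obtain ⟨p, t, he, _, hn⟩ := (neg_mem_SofRR r r' _).1 this
        cases he; exact hn
      rcases h c hc ν with (⟨a, ha, hmem⟩ | ⟨a, ha, hmem⟩ | hbi)
      · obtain ⟨i, hi⟩ := List.mem_iff_get.1 ha
        have hij : i ≠ j := by
          rintro rfl
          exact hjnot (by rw [hi]; exact hmem)
        exact ⟨_, Or.inl ⟨i, hij, rfl⟩,
          (pos_primed_mem_SofRR r r' _ _).2 (by rw [hi]; exact hmem)⟩
      · refine ⟨_, Or.inr ⟨a, ha, rfl⟩, (neg_mem_SofRR r r' _).2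
          ⟨a.1, a.2.map ν, rfl, ?_, hmem⟩⟩
        simpa using c.wfneg a ha
      · exact absurd hbi hb
    · -- stabilizing rule (negative literal j)
      have hjmem : ((c.neg.get j).1, (c.neg.get j).2.map ν) ∈ r'.atoms := by
        have := hbody (Or.inr rfl)
        exact (pos_primed_mem_SofRR r r' _ _).1 this
      rcases h c hc ν with (⟨a, ha, hmem⟩ | ⟨a, ha, hmem⟩ | hbi)
      · exact ⟨_, Or.inl ⟨a, ha, rfl⟩, (pos_primed_mem_SofRR r r' _ _).2 hmem⟩
      · obtain ⟨i, hi⟩ := List.mem_iff_get.1 ha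
        have hij : i ≠ j := by
          rintro rfl
          exact hmem (by rw [hi] at hjmem; exact hjmem)
        refine ⟨_, Or.inr ⟨i, hij, rfl⟩, (neg_mem_SofRR r r' _).2
          ⟨(c.neg.get i).1, (c.neg.get i).2.map ν, rfl, ?_, by rw [hi]; exact hmem⟩⟩
        rw [hi]; simpa using c.wfneg a ha
      · exact absurd hbi hb

end CQA
end

section
/- Let r be a database instance over a finite domain D and IC a set of binary integrity constraints. If S_M is an answer set of the change program Π_Δ(r), then the set S = S_M ∪ {p′(ā) | p(ā) ∈ S_M and ¬p′(ā) ∉ S_M} ∪ {¬p′(ā) | p(ā) ∉ S_M and p′(ā) ∉ S_M} is an answer set of the repair program Π(r). -/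
namespace CQA

variable {Pred D : Type} {ar : Pred → ℕ}

section Statement3Aux

variable {Pred D : Type} {ar : Pred → ℕ}

/-- The positive additions `{p′(ā) | p(ā) ∈ S_M, ¬p′(ā) ∉ S_M}`. -/
def APlus (ar : Pred → ℕ) (SM : Set (Lit (GAtom Pred D))) : Set (Lit (GAtom Pred D)) :=
  {L | ∃ a : DBAtom Pred D, a.2.length = ar a.1 ∧
    Lit.pos (GAtom.base a.1 a.2) ∈ SM ∧ Lit.neg (GAtom.primed a.1 a.2) ∉ SM ∧
    L = Lit.pos (GAtom.primed a.1 a.2)}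

/-- The negative additions `{¬p′(ā) | p(ā) ∉ S_M, p′(ā) ∉ S_M}`. -/
def AMinus (ar : Pred → ℕ) (SM : Set (Lit (GAtom Pred D))) : Set (Lit (GAtom Pred D)) :=
  {L | ∃ a : DBAtom Pred D, a.2.length = ar a.1 ∧
    Lit.pos (GAtom.base a.1 a.2) ∉ SM ∧ Lit.pos (GAtom.primed a.1 a.2) ∉ SM ∧
    L = Lit.neg (GAtom.primed a.1 a.2)}

lemma sat_rule {α : Type} {P : Program α} {S T : Set (Lit α)} {R : Rule α}
    (hT : SatProg T (reduct P S)) (hR : R ∈ P) (hn : ∀ L ∈ R.nbody, L ∉ S)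
    (hb : R.body ⊆ T) : ∃ L ∈ R.head, L ∈ T := by
  have := hT (Rule.mk R.head R.body ∅) ⟨R, hR, hn, rfl⟩ hb
    (fun L hL => absurd hL (Set.notMem_empty L))
  exact this

lemma fact_forces {α : Type} {P : Program α} {S T : Set (Lit α)} {L : Lit α}
    (hT : SatProg T (reduct P S)) (hR : fact L ∈ P) : L ∈ T := by
  obtain ⟨L', hL', hmem⟩ := sat_rule hT hR
    (fun L hL => absurd hL (Set.notMem_empty L)) (Set.empty_subset T)
  rwa [Set.mem_singleton_iff.mp hL'] at hmem

lemma factBase_mem {r : Instance Pred D ar} {IC : Set (BIC Pred D ar)}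
    {a : DBAtom Pred D} (ha : a ∈ r.atoms) :
    fact (Lit.pos (GAtom.base a.1 a.2)) ∈ changeProg r IC :=
  Or.inl (Or.inl (Or.inl (Or.inl ⟨a, ha, rfl⟩)))

lemma factDom_mem {r : Instance Pred D ar} {IC : Set (BIC Pred D ar)} (d : D) :
    fact (Lit.pos (GAtom.dom d)) ∈ changeProg r IC :=
  Or.inl (Or.inl (Or.inl (Or.inr ⟨d, trivial, rfl⟩)))

lemma trig_mem {r : Instance Pred D ar} {IC : Set (BIC Pred D ar)}
    {c : BIC Pred D ar} (hc : c ∈ IC) {ν : Fin c.nvars → D} (hnb : ¬ c.builtin ν) :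
    trigRule c ν ∈ changeProg r IC :=
  Or.inl (Or.inl (Or.inr ⟨c, hc, ν, fun _ => trivial, hnb, rfl⟩))

lemma stabPos_mem {r : Instance Pred D ar} {IC : Set (BIC Pred D ar)}
    {c : BIC Pred D ar} (hc : c ∈ IC) {ν : Fin c.nvars → D} (hnb : ¬ c.builtin ν)
    (j : Fin c.pos.length) : stabPosRule c ν j ∈ changeProg r IC :=
  Or.inl (Or.inr ⟨c, hc, ν, fun _ => trivial, hnb, j, rfl⟩)

lemma stabNeg_mem {r : Instance Pred D ar} {IC : Set (BIC Pred D ar)}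
    {c : BIC Pred D ar} (hc : c ∈ IC) {ν : Fin c.nvars → D} (hnb : ¬ c.builtin ν)
    (j : Fin c.neg.length) : stabNegRule c ν j ∈ changeProg r IC :=
  Or.inr ⟨c, hc, ν, fun _ => trivial, hnb, j, rfl⟩

lemma persist1_mem {r : Instance Pred D ar} {IC : Set (BIC Pred D ar)}
    (p : Pred) (t : List D) (ht : t.length = ar p) :
    Rule.mk {Lit.pos (GAtom.primed p t)} {Lit.pos (GAtom.base p t)}
      {Lit.neg (GAtom.primed p t)} ∈ repairProg r IC :=
  Or.inr ⟨p, t, ht, fun _ _ => trivial, Or.inl rfl⟩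

lemma persist2_mem {r : Instance Pred D ar} {IC : Set (BIC Pred D ar)}
    (p : Pred) (t : List D) (ht : t.length = ar p) :
    Rule.mk {Lit.neg (GAtom.primed p t)} {L | ∃ d ∈ t, L = Lit.pos (GAtom.dom d)}
      {Lit.pos (GAtom.base p t), Lit.pos (GAtom.primed p t)} ∈ repairProg r IC :=
  Or.inr ⟨p, t, ht, fun _ _ => trivial, Or.inr rfl⟩

lemma change_subset_repair {r : Instance Pred D ar} {IC : Set (BIC Pred D ar)} :
    changeProg r IC ⊆ repairProg r IC := fun _ h => Or.inl h

lemma arity_pos (c : BIC Pred D ar) (ν : Fin c.nvars → D) {a : Pred × List (Fin c.nvars)}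
    (ha : a ∈ c.pos) : (a.2.map ν).length = ar a.1 := by
  simpa using c.wfpos a ha

lemma arity_neg (c : BIC Pred D ar) (ν : Fin c.nvars → D) {a : Pred × List (Fin c.nvars)}
    (ha : a ∈ c.neg) : (a.2.map ν).length = ar a.1 := by
  simpa using c.wfneg a ha

lemma mem_of_getElem {α : Type} {l : List α} (i : Fin l.length) : l.get i ∈ l :=
  List.get_mem l i

/-- Key lemma for stabilizing rules on positive literals: if the deleted literal
`¬p′_j` comes from `AMinus` and no head disjunct of the stabilizing rule is in
`S`, we derive a contradiction using the triggering rule and the other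
stabilizing rules, evaluated in `S_M`. -/
lemma stabPos_key (r : Instance Pred D ar) {IC : Set (BIC Pred D ar)}
    {SM : Set (Lit (GAtom Pred D))}
    (hsat : SatProg SM (reduct (changeProg r IC) SM))
    {c : BIC Pred D ar} (hc : c ∈ IC) {ν : Fin c.nvars → D} (hnbi : ¬ c.builtin ν)
    (j : Fin c.pos.length)
    (hb : Lit.pos (GAtom.base (c.pos.get j).1 ((c.pos.get j).2.map ν)) ∉ SM)
    (hp : Lit.pos (GAtom.primed (c.pos.get j).1 ((c.pos.get j).2.map ν)) ∉ SM)
    (hH : ∀ L ∈ (stabPosRule c ν j).head, L ∉ SM ∪ APlus ar SM ∪ AMinus ar SM) :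
    False := by
  have hdom : ∀ d, Lit.pos (GAtom.dom d) ∈ SM :=
    fun d => fact_forces hsat (factDom_mem d)
  -- no positive primed head atom of c is in SM
  have posNSM : ∀ a ∈ c.pos, Lit.pos (GAtom.primed a.1 (a.2.map ν)) ∉ SM := by
    intro a ha
    obtain ⟨m, hm⟩ := List.get_of_mem ha
    by_cases hmj : m = j
    · subst hmj; rw [← hm]; exact hp
    · rw [← hm]
      exact fun h => hH _ (Or.inl ⟨m, hmj, rfl⟩) (Or.inl (Or.inl h))
  -- no negative primed head atom of c is in SM
  have negNSM : ∀ a ∈ c.neg, Lit.neg (GAtom.primed a.1 (a.2.map ν)) ∉ SM := by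
    intro a ha h
    exact hH _ (Or.inr ⟨a, ha, rfl⟩) (Or.inl (Or.inl h))
  -- step 1: no positive base atom of c is in SM
  have step1 : ∀ i : Fin c.pos.length,
      Lit.pos (GAtom.base (c.pos.get i).1 ((c.pos.get i).2.map ν)) ∉ SM := by
    intro i
    by_cases hij : i = j
    · subst hij; exact hb
    · intro hbase
      have hHd : Lit.pos (GAtom.primed (c.pos.get i).1 ((c.pos.get i).2.map ν)) ∈
          (stabPosRule c ν j).head := Or.inl ⟨i, hij, rfl⟩
      have hnotS := hH _ hHd
      have hnegpr : Lit.neg (GAtom.primed (c.pos.get i).1 ((c.pos.get i).2.map ν)) ∈ SM := by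
        by_contra hng
        exact hnotS (Or.inl (Or.inr ⟨((c.pos.get i).1, (c.pos.get i).2.map ν),
          arity_pos c ν (mem_of_getElem i), hbase, hng, rfl⟩))
      obtain ⟨L, hLh, hLS⟩ := sat_rule hsat (stabPos_mem hc hnbi i)
        (fun L hL => absurd hL (Set.notMem_empty L))
        (by
          rintro L (⟨v, _, rfl⟩ | hL)
          · exact hdom _
          · rw [Set.mem_singleton_iff.mp hL]; exact hnegpr)
      rcases hLh with ⟨k, hk, rfl⟩ | ⟨a, ha, rfl⟩
      · exact posNSM _ (mem_of_getElem k) hLS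
      · exact negNSM a ha hLS
  -- step 2: every negative base atom of c is in SM
  have step2 : ∀ a ∈ c.neg, Lit.pos (GAtom.base a.1 (a.2.map ν)) ∈ SM := by
    intro b hbmem
    by_contra hbase
    have hprm : Lit.pos (GAtom.primed b.1 (b.2.map ν)) ∈ SM := by
      by_contra h
      exact hH _ (Or.inr ⟨b, hbmem, rfl⟩)
        (Or.inr ⟨(b.1, b.2.map ν), arity_neg c ν hbmem, hbase, h, rfl⟩)
    obtain ⟨i, hi⟩ := List.get_of_mem hbmem
    obtain ⟨L, hLh, hLS⟩ := sat_rule hsat (stabNeg_mem hc hnbi i)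
      (fun L hL => absurd hL (Set.notMem_empty L))
      (by
        rintro L (⟨v, _, rfl⟩ | hL)
        · exact hdom _
        · rw [Set.mem_singleton_iff.mp hL, hi]; exact hprm)
    rcases hLh with ⟨a, ha, rfl⟩ | ⟨k, hk, rfl⟩
    · exact posNSM a ha hLS
    · exact negNSM _ (mem_of_getElem k) hLS
  -- the triggering rule fires in SM, contradiction
  obtain ⟨L, hLh, hLS⟩ := sat_rule hsat (trig_mem hc hnbi)
    (by
      rintro L ⟨a, ha, rfl⟩
      obtain ⟨i, hi⟩ := List.get_of_mem ha
      rw [← hi]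
      exact step1 i)
    (by
      rintro L (⟨v, _, rfl⟩ | ⟨a, ha, rfl⟩)
      · exact hdom _
      · exact step2 a ha)
  rcases hLh with ⟨a, ha, rfl⟩ | ⟨a, ha, rfl⟩
  · exact posNSM a ha hLS
  · exact negNSM a ha hLS

/-- Key lemma for stabilizing rules on negative literals. -/
lemma stabNeg_key (r : Instance Pred D ar) {IC : Set (BIC Pred D ar)}
    {SM : Set (Lit (GAtom Pred D))}
    (hsat : SatProg SM (reduct (changeProg r IC) SM))
    {c : BIC Pred D ar} (hc : c ∈ IC) {ν : Fin c.nvars → D} (hnbi : ¬ c.builtin ν)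
    (j : Fin c.neg.length)
    (hb : Lit.pos (GAtom.base (c.neg.get j).1 ((c.neg.get j).2.map ν)) ∈ SM)
    (hnp : Lit.neg (GAtom.primed (c.neg.get j).1 ((c.neg.get j).2.map ν)) ∉ SM)
    (hpp : Lit.pos (GAtom.primed (c.neg.get j).1 ((c.neg.get j).2.map ν)) ∉ SM)
    (hH : ∀ L ∈ (stabNegRule c ν j).head, L ∉ SM ∪ APlus ar SM ∪ AMinus ar SM) :
    False := by
  have hdom : ∀ d, Lit.pos (GAtom.dom d) ∈ SM :=
    fun d => fact_forces hsat (factDom_mem d)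
  have negNSM : ∀ a ∈ c.neg, Lit.neg (GAtom.primed a.1 (a.2.map ν)) ∉ SM := by
    intro a ha
    obtain ⟨m, hm⟩ := List.get_of_mem ha
    by_cases hmj : m = j
    · subst hmj; rw [← hm]; exact hnp
    · rw [← hm]
      exact fun h => hH _ (Or.inr ⟨m, hmj, rfl⟩) (Or.inl (Or.inl h))
  have posNSM : ∀ a ∈ c.pos, Lit.pos (GAtom.primed a.1 (a.2.map ν)) ∉ SM := by
    intro a ha h
    exact hH _ (Or.inl ⟨a, ha, rfl⟩) (Or.inl (Or.inl h))
  -- step 1: no positive base atom of c is in SM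
  have step1 : ∀ a ∈ c.pos, Lit.pos (GAtom.base a.1 (a.2.map ν)) ∉ SM := by
    intro a ha hbase
    have hnegpr : Lit.neg (GAtom.primed a.1 (a.2.map ν)) ∈ SM := by
      by_contra hng
      exact hH _ (Or.inl ⟨a, ha, rfl⟩)
        (Or.inl (Or.inr ⟨(a.1, a.2.map ν), arity_pos c ν ha, hbase, hng, rfl⟩))
    obtain ⟨i, hi⟩ := List.get_of_mem ha
    obtain ⟨L, hLh, hLS⟩ := sat_rule hsat (stabPos_mem hc hnbi i)
      (fun L hL => absurd hL (Set.notMem_empty L))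
      (by
        rintro L (⟨v, _, rfl⟩ | hL)
        · exact hdom _
        · rw [Set.mem_singleton_iff.mp hL, hi]; exact hnegpr)
    rcases hLh with ⟨k, hk, rfl⟩ | ⟨b, hbm, rfl⟩
    · exact posNSM _ (mem_of_getElem k) hLS
    · exact negNSM b hbm hLS
  -- step 2: every negative base atom of c is in SM
  have step2 : ∀ i : Fin c.neg.length,
      Lit.pos (GAtom.base (c.neg.get i).1 ((c.neg.get i).2.map ν)) ∈ SM := by
    intro i
    by_cases hij : i = j
    · subst hij; exact hb
    · by_contra hbase
      have hHd : Lit.neg (GAtom.primed (c.neg.get i).1 ((c.neg.get i).2.map ν)) ∈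
          (stabNegRule c ν j).head := Or.inr ⟨i, hij, rfl⟩
      have hnotS := hH _ hHd
      have hprm : Lit.pos (GAtom.primed (c.neg.get i).1 ((c.neg.get i).2.map ν)) ∈ SM := by
        by_contra h
        exact hnotS (Or.inr ⟨((c.neg.get i).1, (c.neg.get i).2.map ν),
          arity_neg c ν (mem_of_getElem i), hbase, h, rfl⟩)
      obtain ⟨L, hLh, hLS⟩ := sat_rule hsat (stabNeg_mem hc hnbi i)
        (fun L hL => absurd hL (Set.notMem_empty L))
        (by
          rintro L (⟨v, _, rfl⟩ | hL)
          · exact hdom _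
          · rw [Set.mem_singleton_iff.mp hL]; exact hprm)
      rcases hLh with ⟨a, ha, rfl⟩ | ⟨k, hk, rfl⟩
      · exact posNSM a ha hLS
      · exact negNSM _ (mem_of_getElem k) hLS
  obtain ⟨L, hLh, hLS⟩ := sat_rule hsat (trig_mem hc hnbi)
    (by
      rintro L ⟨a, ha, rfl⟩
      exact step1 a ha)
    (by
      rintro L (⟨v, _, rfl⟩ | ⟨a, ha, rfl⟩)
      · exact hdom _
      · obtain ⟨i, hi⟩ := List.get_of_mem ha
        rw [← hi]
        exact step2 i)
  rcases hLh with ⟨a, ha, rfl⟩ | ⟨a, ha, rfl⟩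
  · exact posNSM a ha hLS
  · exact negNSM a ha hLS

lemma mem_len_le_one {α : Type} {l : List α} (h : l.length ≤ 1) {a b : α}
    (ha : a ∈ l) (hb : b ∈ l) : a = b := by
  match l with
  | [] => simp at ha
  | [x] =>
    simp at ha hb
    rw [ha, hb]
  | x :: y :: t => simp at h

/-- The head of a stabilizing rule (positive case) is a subsingleton. -/
lemma stabPos_head_sub (c : BIC Pred D ar) (ν : Fin c.nvars → D) (j : Fin c.pos.length) :
    ∀ L ∈ (stabPosRule c ν j).head, ∀ L' ∈ (stabPosRule c ν j).head, L = L' := by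
  have hub := c.ub
  rintro L (⟨i, hi, rfl⟩ | ⟨a, ha, rfl⟩) L' (⟨i', hi', rfl⟩ | ⟨a', ha', rfl⟩)
  · have : i = i' := by
      have h1 := i.2; have h2 := i'.2; have h3 := j.2
      have : i.1 = i'.1 := by
        by_contra hne
        have hi1 : i.1 ≠ j.1 := fun h => hi (Fin.ext h)
        have hi2 : i'.1 ≠ j.1 := fun h => hi' (Fin.ext h)
        omega
      exact Fin.ext this
    rw [this]
  · exfalso
    have h2 : 1 ≤ c.neg.length := List.length_pos_iff.mpr (fun h => by rw [h] at ha'; simp at ha')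
    have h1 : 2 ≤ c.pos.length := by
      have := i.2; have := j.2
      have : i.1 ≠ j.1 := fun h => hi (Fin.ext h)
      omega
    omega
  · exfalso
    have h2 : 1 ≤ c.neg.length := List.length_pos_iff.mpr (fun h => by rw [h] at ha; simp at ha)
    have h1 : 2 ≤ c.pos.length := by
      have := i'.2; have := j.2
      have : i'.1 ≠ j.1 := fun h => hi' (Fin.ext h)
      omega
    omega
  · have : a = a' := by
      refine mem_len_le_one ?_ ha ha'
      have := j.2
      omega
    rw [this]

/-- The head of a stabilizing rule (negative case) is a subsingleton. -/
lemma stabNeg_head_sub (c : BIC Pred D ar) (ν : Fin c.nvars → D) (j : Fin c.neg.length) :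
    ∀ L ∈ (stabNegRule c ν j).head, ∀ L' ∈ (stabNegRule c ν j).head, L = L' := by
  have hub := c.ub
  rintro L (⟨a, ha, rfl⟩ | ⟨i, hi, rfl⟩) L' (⟨a', ha', rfl⟩ | ⟨i', hi', rfl⟩)
  · have : a = a' := by
      refine mem_len_le_one ?_ ha ha'
      have := j.2
      omega
    rw [this]
  · exfalso
    have h2 : 1 ≤ c.pos.length := List.length_pos_iff.mpr (fun h => by rw [h] at ha; simp at ha)
    have h1 : 2 ≤ c.neg.length := by
      have := i'.2; have := j.2
      have : i'.1 ≠ j.1 := fun h => hi' (Fin.ext h)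
      omega
    omega
  · exfalso
    have h2 : 1 ≤ c.pos.length := List.length_pos_iff.mpr (fun h => by rw [h] at ha'; simp at ha')
    have h1 : 2 ≤ c.neg.length := by
      have := i.2; have := j.2
      have : i.1 ≠ j.1 := fun h => hi (Fin.ext h)
      omega
    omega
  · have : i = i' := by
      have h1 := i.2; have h2 := i'.2; have h3 := j.2
      have : i.1 = i'.1 := by
        by_contra hne
        have hi1 : i.1 ≠ j.1 := fun h => hi (Fin.ext h)
        have hi2 : i'.1 ≠ j.1 := fun h => hi' (Fin.ext h)
        omega
      exact Fin.ext this
    rw [this]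

end Statement3Aux

/-- Proposition `aux2`. Let `r` be a database instance over a
finite domain `D` and `IC` a set of binary integrity constraints. If `S_M` is
an answer set of the change program `Π_Δ(r)`, then
`S = S_M ∪ {p′(ā) | p(ā) ∈ S_M and ¬p′(ā) ∉ S_M}
       ∪ {¬p′(ā) | p(ā) ∉ S_M and p′(ā) ∉ S_M}`
is an answer set of the repair program `Π(r)`. -/
theorem statement3 {Pred D : Type} [Finite Pred] [Finite D] {ar : Pred → ℕ}
    (r : Instance Pred D ar) (IC : Set (BIC Pred D ar))
    (SM : Set (Lit (GAtom Pred D))) (hSM : AnswerSet SM (changeProg r IC)) :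
    AnswerSet
      (SM ∪
        {L | ∃ a : DBAtom Pred D, a.2.length = ar a.1 ∧
          Lit.pos (GAtom.base a.1 a.2) ∈ SM ∧ Lit.neg (GAtom.primed a.1 a.2) ∉ SM ∧
          L = Lit.pos (GAtom.primed a.1 a.2)} ∪
        {L | ∃ a : DBAtom Pred D, a.2.length = ar a.1 ∧
          Lit.pos (GAtom.base a.1 a.2) ∉ SM ∧ Lit.pos (GAtom.primed a.1 a.2) ∉ SM ∧
          L = Lit.neg (GAtom.primed a.1 a.2)})
      (repairProg r IC) := by
  show AnswerSet (SM ∪ APlus ar SM ∪ AMinus ar SM) (repairProg r IC)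
  obtain ⟨hcoh, hsat, hmin⟩ := hSM
  have hdom : ∀ d, Lit.pos (GAtom.dom d) ∈ SM := fun d => fact_forces hsat (factDom_mem d)
  have hSMS : SM ⊆ SM ∪ APlus ar SM ∪ AMinus ar SM := fun L hL => Or.inl (Or.inl hL)
  have hbaseS : ∀ p t, Lit.pos (GAtom.base p t) ∈ SM ∪ APlus ar SM ∪ AMinus ar SM →
      Lit.pos (GAtom.base p t) ∈ SM := by
    rintro p t ((h | ⟨a, _, _, _, heq⟩) | ⟨a, _, _, _, heq⟩)
    · exact h
    · simp [APlus] at heq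
    · simp [AMinus] at heq
  refine ⟨?_, ?_, ?_⟩
  · -- Coherence
    rintro x ⟨hpos, hneg⟩
    rcases hpos with (hpos | ⟨a, ha1, ha2, ha3, heq⟩) | ⟨a, _, _, _, heq⟩
    · rcases hneg with (hneg | ⟨b, _, _, _, heq'⟩) | ⟨b, hb1, hb2, hb3, heq'⟩
      · exact hcoh x ⟨hpos, hneg⟩
      · simp at heq'
      · injection heq' with h; subst h
        exact hb3 hpos
    · injection heq with h; subst h
      rcases hneg with (hneg | ⟨b, _, _, _, heq'⟩) | ⟨b, hb1, hb2, hb3, heq'⟩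
      · exact ha3 hneg
      · simp at heq'
      · injection heq' with h'
        injection h' with h1 h2
        rw [← h1, ← h2] at hb2
        exact hb2 ha2
    · simp at heq
  · -- Satisfaction of the reduct
    rintro R' ⟨R, hR, hnb, rfl⟩ hbody _
    rcases hR with hR | ⟨p, t, ht, _, (rfl | rfl)⟩
    · -- change program rules
      rcases hR with (((⟨a, ha, rfl⟩ | ⟨d, _, rfl⟩) | ⟨c, hc, ν, _, hnbi, rfl⟩) |
        ⟨c, hc, ν, _, hnbi, j, rfl⟩) | ⟨c, hc, ν, _, hnbi, j, rfl⟩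
      · exact ⟨_, rfl, hSMS (fact_forces hsat (factBase_mem ha))⟩
      · exact ⟨_, rfl, hSMS (fact_forces hsat (factDom_mem d))⟩
      · -- triggering rule
        obtain ⟨L, hLh, hLS⟩ := sat_rule hsat (trig_mem hc hnbi)
          (fun L hL h => hnb L hL (hSMS h))
          (by
            rintro L (⟨v, hv, rfl⟩ | ⟨a, ha, rfl⟩)
            · exact hdom _
            · exact hbaseS _ _ (hbody (Or.inr ⟨a, ha, rfl⟩)))
        exact ⟨L, hLh, hSMS hLS⟩
      · -- stabilizing rule, positive case
        have hL0 : Lit.neg (GAtom.primed (c.pos.get j).1 ((c.pos.get j).2.map ν)) ∈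
            SM ∪ APlus ar SM ∪ AMinus ar SM := hbody (Or.inr rfl)
        by_cases hin : Lit.neg (GAtom.primed (c.pos.get j).1 ((c.pos.get j).2.map ν)) ∈ SM
        · obtain ⟨L, hLh, hLS⟩ := sat_rule hsat (stabPos_mem hc hnbi j)
            (fun L hL => absurd hL (Set.notMem_empty L))
            (by
              rintro L (⟨v, hv, rfl⟩ | hL)
              · exact hdom _
              · rw [Set.mem_singleton_iff.mp hL]; exact hin)
          exact ⟨L, hLh, hSMS hLS⟩
        · rcases hL0 with (hL0 | ⟨a, _, _, _, heq⟩) | ⟨a, har, hab, hap, heq⟩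
          · exact absurd hL0 hin
          · simp [APlus] at heq
          · injection heq with h'
            injection h' with h1 h2
            rw [← h1, ← h2] at hab hap
            by_contra hcon
            push_neg at hcon
            exact stabPos_key r hsat hc hnbi j hab hap hcon
      · -- stabilizing rule, negative case
        have hL0 : Lit.pos (GAtom.primed (c.neg.get j).1 ((c.neg.get j).2.map ν)) ∈
            SM ∪ APlus ar SM ∪ AMinus ar SM := hbody (Or.inr rfl)
        by_cases hin : Lit.pos (GAtom.primed (c.neg.get j).1 ((c.neg.get j).2.map ν)) ∈ SM
        · obtain ⟨L, hLh, hLS⟩ := sat_rule hsat (stabNeg_mem hc hnbi j)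
            (fun L hL => absurd hL (Set.notMem_empty L))
            (by
              rintro L (⟨v, hv, rfl⟩ | hL)
              · exact hdom _
              · rw [Set.mem_singleton_iff.mp hL]; exact hin)
          exact ⟨L, hLh, hSMS hLS⟩
        · rcases hL0 with (hL0 | ⟨a, har, hab, han, heq⟩) | ⟨a, _, _, _, heq⟩
          · exact absurd hL0 hin
          · injection heq with h'
            injection h' with h1 h2
            rw [← h1, ← h2] at hab han
            by_contra hcon
            push_neg at hcon
            exact stabNeg_key r hsat hc hnbi j hab han hin hcon
          · simp [AMinus] at heq
    · -- persistence rule 1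
      have hbase : Lit.pos (GAtom.base p t) ∈ SM := hbaseS _ _ (hbody rfl)
      have hnp : Lit.neg (GAtom.primed p t) ∉ SM :=
        fun h => hnb _ rfl (hSMS h)
      exact ⟨_, rfl, Or.inl (Or.inr ⟨(p, t), ht, hbase, hnp, rfl⟩)⟩
    · -- persistence rule 2
      have hbase : Lit.pos (GAtom.base p t) ∉ SM :=
        fun h => hnb _ (Set.mem_insert _ _) (hSMS h)
      have hpp : Lit.pos (GAtom.primed p t) ∉ SM :=
        fun h => hnb _ (Set.mem_insert_of_mem _ rfl) (hSMS h)
      exact ⟨_, rfl, Or.inr ⟨(p, t), ht, hbase, hpp, rfl⟩⟩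
  · -- Minimality
    intro S' hsub hsat'
    have hT : SatProg (S' ∩ SM) (reduct (changeProg r IC) SM) := by
      rintro R' ⟨R, hR, hnbSM, rfl⟩ hbody _
      have hbS' : R.body ⊆ S' := fun L hL => (hbody hL).1
      have hbSM : R.body ⊆ SM := fun L hL => (hbody hL).2
      rcases hR with (((⟨a, ha, rfl⟩ | ⟨d, _, rfl⟩) | ⟨c, hc, ν, _, hnbi, rfl⟩) |
        ⟨c, hc, ν, _, hnbi, j, rfl⟩) | ⟨c, hc, ν, _, hnbi, j, rfl⟩
      · exact ⟨_, rfl, fact_forces hsat' (change_subset_repair (factBase_mem ha)),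
          fact_forces hsat (factBase_mem ha)⟩
      · exact ⟨_, rfl, fact_forces hsat' (change_subset_repair (factDom_mem d)),
          fact_forces hsat (factDom_mem d)⟩
      · -- triggering rule
        have hnbS : ∀ L ∈ (trigRule c ν).nbody, L ∉ SM ∪ APlus ar SM ∪ AMinus ar SM := by
          rintro L ⟨a, ha, rfl⟩ hLS
          exact hnbSM _ ⟨a, ha, rfl⟩ (hbaseS _ _ hLS)
        obtain ⟨L, hLh, hLS'⟩ := sat_rule hsat' (change_subset_repair (trig_mem hc hnbi))
          hnbS hbS'
        refine ⟨L, hLh, hLS', ?_⟩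
        rcases hsub hLS' with (h | ⟨b, hb1, hb2, hb3, heq⟩) | ⟨b, hb1, hb2, hb3, heq⟩
        · exact h
        · exfalso
          rcases hLh with ⟨a, ha, rfl⟩ | ⟨a, ha, rfl⟩
          · injection heq with h'
            injection h' with h1 h2
            rw [← h1, ← h2] at hb2
            exact hnbSM _ ⟨a, ha, rfl⟩ hb2
          · simp [APlus] at heq
        · exfalso
          rcases hLh with ⟨a, ha, rfl⟩ | ⟨a, ha, rfl⟩
          · simp at heq
          · injection heq with h'
            injection h' with h1 h2
            rw [← h1, ← h2] at hb2
            exact hb2 (hbSM (Or.inr ⟨a, ha, rfl⟩))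
      · -- stabilizing rule, positive case
        obtain ⟨L0, hL0h, hL0⟩ := sat_rule hsat (stabPos_mem hc hnbi j)
          (fun L hL => absurd hL (Set.notMem_empty L)) hbSM
        obtain ⟨L1, hL1h, hL1⟩ := sat_rule hsat' (change_subset_repair (stabPos_mem hc hnbi j))
          (fun L hL => absurd hL (Set.notMem_empty L)) hbS'
        refine ⟨L1, hL1h, hL1, ?_⟩
        rw [stabPos_head_sub c ν j L1 hL1h L0 hL0h]
        exact hL0
      · -- stabilizing rule, negative case
        obtain ⟨L0, hL0h, hL0⟩ := sat_rule hsat (stabNeg_mem hc hnbi j)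
          (fun L hL => absurd hL (Set.notMem_empty L)) hbSM
        obtain ⟨L1, hL1h, hL1⟩ := sat_rule hsat' (change_subset_repair (stabNeg_mem hc hnbi j))
          (fun L hL => absurd hL (Set.notMem_empty L)) hbS'
        refine ⟨L1, hL1h, hL1, ?_⟩
        rw [stabNeg_head_sub c ν j L1 hL1h L0 hL0h]
        exact hL0
    have hTeq : S' ∩ SM = SM := hmin (S' ∩ SM) Set.inter_subset_right hT
    have hSM_sub : SM ⊆ S' := by
      intro L hL
      have : L ∈ S' ∩ SM := by rw [hTeq]; exact hL
      exact this.1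
    refine Set.Subset.antisymm hsub ?_
    rintro L ((hL | ⟨a, har, hbase, hnp, rfl⟩) | ⟨a, har, hbase, hpp, rfl⟩)
    · exact hSM_sub hL
    · -- APlus via persistence rule 1
      have hnpS : Lit.neg (GAtom.primed a.1 a.2) ∉ SM ∪ APlus ar SM ∪ AMinus ar SM := by
        rintro ((h | ⟨b, _, _, _, heq⟩) | ⟨b, hb1, hb2, hb3, heq⟩)
        · exact hnp h
        · simp [APlus] at heq
        · injection heq with h'
          injection h' with h1 h2
          rw [← h1, ← h2] at hb2
          exact hb2 hbase
      obtain ⟨L, hLh, hLS'⟩ := sat_rule hsat' (persist1_mem a.1 a.2 har)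
        (by
          rintro L hL
          rw [Set.mem_singleton_iff.mp hL]
          exact hnpS)
        (by
          rintro L hL
          rw [Set.mem_singleton_iff.mp hL]
          exact hSM_sub hbase)
      rw [← Set.mem_singleton_iff.mp hLh]
      exact hLS'
    · -- AMinus via persistence rule 2
      have hnb2 : ∀ L' ∈ ({Lit.pos (GAtom.base a.1 a.2), Lit.pos (GAtom.primed a.1 a.2)} :
          Set (Lit (GAtom Pred D))), L' ∉ SM ∪ APlus ar SM ∪ AMinus ar SM := by
        rintro L' (rfl | hL')
        · exact fun h => hbase (hbaseS _ _ h)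
        · rw [Set.mem_singleton_iff.mp hL']
          rintro ((h | ⟨b, _, hb2, _, heq⟩) | ⟨b, _, _, _, heq⟩)
          · exact hpp h
          · injection heq with h'
            injection h' with h1 h2
            rw [← h1, ← h2] at hb2
            exact hbase hb2
          · simp [AMinus] at heq
      obtain ⟨L, hLh, hLS'⟩ := sat_rule hsat' (persist2_mem a.1 a.2 har) hnb2
        (by
          rintro L ⟨d, _, rfl⟩
          exact hSM_sub (hdom d))
      rw [← Set.mem_singleton_iff.mp hLh]
      exact hLS'

end CQA
end

section
/- Let r and r′ be database instances over the same schema and finite domain D, and IC a set of binary integrity constraints. Assume r′ ⊨ IC and the symmetric difference Δ(r,r′) is a minimal element under set inclusion of the set {Δ(r,r*) | r* ⊨ IC}. Then for every answer set S of the change program Π_Δ(r) with S ⊆ S(r,r′), it holds that r′ = I(S). -/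
/-! An answer set `S` of `Π_Δ(r)` is in particular a coherent model of `Π_Δ(r)`, and for every
coherent model `S` the instance `I(S)` satisfies `IC`: at a violated ground instance of a
constraint, either some `¬p′_j` or `q′_j` is already in `S` and the corresponding stabilizing
rule fires, or none is and the triggering rule fires; in both cases the fired head literal
contradicts the violation. If moreover `S ⊆ S(r,r′)`, then `I(S)` only changes atoms that `r′`
changes, so `Δ(r, I(S)) ⊆ Δ(r, r′)`; minimality of `Δ(r, r′)` gives equality, hence
`I(S) = r′`. -/

namespace CQA

variable {Pred D : Type} {ar : Pred → ℕ}

section AnswerSets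

variable {α : Type} {S : Set (Lit α)} {P : Program α}

theorem SatProg.of_reduct (h : SatProg S (reduct P S)) : SatProg S P :=
  fun R hR hbody hnbody =>
    h ⟨R.head, R.body, ∅⟩ ⟨R, hR, hnbody, rfl⟩ hbody
      (fun _ hL => absurd hL (Set.notMem_empty _))

theorem AnswerSet.isModel (h : AnswerSet S P) : IsModel S P :=
  ⟨h.1, h.2.1.of_reduct⟩

theorem SatProg.mem_of_fact_mem {L : Lit α} (h : SatProg S P) (hL : fact L ∈ P) : L ∈ S := by
  obtain ⟨L', hL', hL'S⟩ :=
    h _ hL (Set.empty_subset _) (fun _ h => absurd h (Set.notMem_empty _))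
  rwa [Set.mem_singleton_iff.mp hL'] at hL'S

end AnswerSets

section ChangeProgram

variable {r r' : Instance Pred D ar} {IC : Set (BIC Pred D ar)} {S : Set (Lit (GAtom Pred D))}

theorem SatProg.dom_mem (h : SatProg S (changeProg r IC)) (d : D) :
    Lit.pos (GAtom.dom d) ∈ S :=
  h.mem_of_fact_mem (Or.inl <| Or.inl <| Or.inl <| Or.inr ⟨d, trivial, rfl⟩)

theorem SatProg.domBody_subset (h : SatProg S (changeProg r IC)) {n : ℕ} (ν : Fin n → D)
    (V : Set (Fin n)) : domBody ν V ⊆ S := by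
  rintro _ ⟨v, -, rfl⟩
  exact h.dom_mem (ν v)

theorem SatProg.base_mem (h : SatProg S (changeProg r IC)) {a : DBAtom Pred D}
    (ha : a ∈ r.atoms) : Lit.pos (GAtom.base a.1 a.2) ∈ S :=
  h.mem_of_fact_mem (Or.inl <| Or.inl <| Or.inl <| Or.inl ⟨a, ha, rfl⟩)

theorem stabPosRule_head_subset (c : BIC Pred D ar) (ν : Fin c.nvars → D)
    (j : Fin c.pos.length) :
    (stabPosRule c ν j).head ⊆ posHead c ν ∪ negHead c ν := by
  rintro _ (⟨i, -, rfl⟩ | hL)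
  · exact .inl ⟨c.pos.get i, List.get_mem _ _, rfl⟩
  · exact .inr hL

theorem stabNegRule_head_subset (c : BIC Pred D ar) (ν : Fin c.nvars → D)
    (j : Fin c.neg.length) :
    (stabNegRule c ν j).head ⊆ posHead c ν ∪ negHead c ν := by
  rintro _ (hL | ⟨i, -, rfl⟩)
  · exact .inl hL
  · exact .inr ⟨c.neg.get i, List.get_mem _ _, rfl⟩

theorem notMem_head_of_not_holdsAt (hcoh : Coherent S) {c : BIC Pred D ar}
    {ν : Fin c.nvars → D} (hviol : ¬ c.holdsAt (IofS S) ν) :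
    ∀ L ∈ posHead c ν ∪ negHead c ν, L ∉ S := by
  simp only [BIC.holdsAt, not_or, not_exists, not_and, not_not] at hviol
  obtain ⟨hpos, hneg, -⟩ := hviol
  rintro _ (⟨a, ha, rfl⟩ | ⟨b, hb, rfl⟩) hL
  · exact hpos a ha (.inl hL)
  · rcases hneg b hb with h | ⟨-, h⟩
    · exact hcoh _ ⟨h, hL⟩
    · exact h hL

theorem IsModel.satSet_IofS (h : IsModel S (changeProg r IC)) : SatSet (IofS S) IC := by
  obtain ⟨hcoh, hsat⟩ := h
  intro c hc ν
  by_contra hviol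
  have hhead := notMem_head_of_not_holdsAt hcoh hviol
  simp only [BIC.holdsAt, not_or, not_exists, not_and, not_not] at hviol
  obtain ⟨hpos, hneg, hφ⟩ := hviol
  have hfire : ∀ R ∈ changeProg r IC, R.head ⊆ posHead c ν ∪ negHead c ν →
      R.body ⊆ S → (∀ L ∈ R.nbody, L ∉ S) → False := fun R hR hRhead hbody hnbody => by
    obtain ⟨L, hL, hLS⟩ := hsat R hR hbody hnbody
    exact hhead L (hRhead hL) hLS
  by_cases hA : ∃ j, Lit.neg (GAtom.primed (c.pos.get j).1 ((c.pos.get j).2.map ν)) ∈ S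
  · obtain ⟨j, hj⟩ := hA
    exact hfire _ (Or.inl <| Or.inr ⟨c, hc, ν, fun _ => trivial, hφ, j, rfl⟩)
      (stabPosRule_head_subset c ν j)
      (Set.union_subset (hsat.domBody_subset ν _) (Set.singleton_subset_iff.mpr hj))
      (fun _ h => absurd h (Set.notMem_empty _))
  by_cases hB : ∃ j, Lit.pos (GAtom.primed (c.neg.get j).1 ((c.neg.get j).2.map ν)) ∈ S
  · obtain ⟨j, hj⟩ := hB
    exact hfire _ (Or.inr ⟨c, hc, ν, fun _ => trivial, hφ, j, rfl⟩)
      (stabNegRule_head_subset c ν j)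
      (Set.union_subset (hsat.domBody_subset ν _) (Set.singleton_subset_iff.mpr hj))
      (fun _ h => absurd h (Set.notMem_empty _))
  simp only [not_exists] at hA hB
  refine hfire _ (Or.inl <| Or.inl <| Or.inr ⟨c, hc, ν, fun _ => trivial, hφ, rfl⟩)
    subset_rfl ?_ ?_
  · rintro _ (hL | ⟨b, hb, rfl⟩)
    · exact hsat.domBody_subset ν _ hL
    · obtain ⟨j, rfl⟩ := List.mem_iff_get.mp hb
      exact ((hneg _ hb).resolve_left (hB j)).1
  · rintro _ ⟨a, ha, rfl⟩ hL
    obtain ⟨j, rfl⟩ := List.mem_iff_get.mp ha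
    exact hpos _ ha (.inr ⟨hL, hA j⟩)

theorem mem_of_base_mem_SofRR {a : DBAtom Pred D}
    (h : Lit.pos (GAtom.base a.1 a.2) ∈ SofRR r r') : a ∈ r.atoms := by
  rcases h with (((⟨b, hb, he⟩ | ⟨_, _, he⟩) | ⟨_, _, _, he⟩) | ⟨_, he⟩) <;>
    simp only [Lit.pos.injEq, GAtom.base.injEq, reduceCtorEq] at he
  rwa [Prod.ext he.1 he.2]

theorem mem_of_primed_mem_SofRR {a : DBAtom Pred D}
    (h : Lit.pos (GAtom.primed a.1 a.2) ∈ SofRR r r') : a ∈ r'.atoms := by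
  rcases h with (((⟨_, _, he⟩ | ⟨b, hb, he⟩) | ⟨_, _, _, he⟩) | ⟨_, he⟩) <;>
    simp only [Lit.pos.injEq, GAtom.primed.injEq, reduceCtorEq] at he
  rwa [Prod.ext he.1 he.2]

theorem notMem_of_neg_primed_mem_SofRR {a : DBAtom Pred D}
    (h : Lit.neg (GAtom.primed a.1 a.2) ∈ SofRR r r') : a ∉ r'.atoms := by
  rcases h with (((⟨_, _, he⟩ | ⟨_, _, he⟩) | ⟨b, -, hb, he⟩) | ⟨_, he⟩) <;>
    simp only [Lit.neg.injEq, GAtom.primed.injEq, reduceCtorEq] at he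
  rwa [Prod.ext he.1 he.2]

theorem IofS_subset_union (hsub : S ⊆ SofRR r r') : IofS S ⊆ r.atoms ∪ r'.atoms := by
  rintro a (h | ⟨h, -⟩)
  · exact .inr (mem_of_primed_mem_SofRR (hsub h))
  · exact .inl (mem_of_base_mem_SofRR (hsub h))

theorem symmDiff_IofS_subset (h : SatProg S (changeProg r IC)) (hsub : S ⊆ SofRR r r') :
    symmDiff r.atoms (IofS S) ⊆ symmDiff r.atoms r'.atoms := by
  rintro a (⟨har, haI⟩ | ⟨haI, har⟩)
  · have hneg : Lit.neg (GAtom.primed a.1 a.2) ∈ S := by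
      by_contra hneg
      exact haI (.inr ⟨h.base_mem har, hneg⟩)
    exact .inl ⟨har, notMem_of_neg_primed_mem_SofRR (hsub hneg)⟩
  · rcases haI with hprimed | ⟨hbase, -⟩
    · exact .inr ⟨mem_of_primed_mem_SofRR (hsub hprimed), har⟩
    · exact absurd (mem_of_base_mem_SofRR (hsub hbase)) har

end ChangeProgram

def Instance.ofSubsetUnion (r r' : Instance Pred D ar) (A : Set (DBAtom Pred D))
    (h : A ⊆ r.atoms ∪ r'.atoms) : Instance Pred D ar where
  atoms := A
  finite := (r.finite.union r'.finite).subset h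
  wf a ha := (h ha).elim (r.wf a) (r'.wf a)

theorem statement4_general {Pred D : Type} {ar : Pred → ℕ}
    (r r' : Instance Pred D ar) (IC : Set (BIC Pred D ar))
    (hmin : ∀ r'' : Instance Pred D ar, SatIC r'' IC →
      symmDiff r.atoms r''.atoms ⊆ symmDiff r.atoms r'.atoms →
      symmDiff r.atoms r''.atoms = symmDiff r.atoms r'.atoms)
    (S : Set (Lit (GAtom Pred D))) (hS : AnswerSet S (changeProg r IC))
    (hsub : S ⊆ SofRR r r') :
    r'.atoms = IofS S := by
  have hmodel := hS.isModel
  let rS := Instance.ofSubsetUnion r r' (IofS S) (IofS_subset_union hsub)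
  have hΔ : symmDiff r.atoms rS.atoms = symmDiff r.atoms r'.atoms :=
    hmin rS hmodel.satSet_IofS (symmDiff_IofS_subset hmodel.2 hsub)
  exact (symmDiff_right_injective r.atoms hΔ).symm

/-- Lemma `l3`. Let `r`, `r'` be database instances over the
same schema and finite domain `D`, and `IC` a set of binary integrity
constraints. Assume `r' ⊨ IC` and the symmetric difference `Δ(r,r')` is a
minimal element under set inclusion of `{Δ(r,r*) | r* ⊨ IC}`. Then for every
answer set `S` of the change program `Π_Δ(r)` with `S ⊆ S(r,r')`, it holds
that `r' = I(S)`. -/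
theorem statement4 {Pred D : Type} [Finite Pred] [Finite D] {ar : Pred → ℕ}
    (r r' : Instance Pred D ar) (IC : Set (BIC Pred D ar))
    (hsat : SatIC r' IC)
    (hmin : ∀ r'' : Instance Pred D ar, SatIC r'' IC →
      symmDiff r.atoms r''.atoms ⊆ symmDiff r.atoms r'.atoms →
      symmDiff r.atoms r''.atoms = symmDiff r.atoms r'.atoms)
    (S : Set (Lit (GAtom Pred D))) (hS : AnswerSet S (changeProg r IC))
    (hsub : S ⊆ SofRR r r') :
    r'.atoms = IofS S :=
  statement4_general r r' IC hmin S hS hsub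

end CQA
end
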